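/- Let h be a completely monotone function on [0,1]^d. Then for every x ∈ [0,1]^d, V_HK0(h;[0,x]) = h(x) − h(0). -/
import Mathlib


open MeasureTheory Finset

noncomputable section

/-- The quasi-volume `Δ` of `f` over the box `[a,b]` in the coordinates of `S`;
the coordinates outside `S` are fixed according to the anchor point `p`. -/
def quasiVol {d : ℕ} (f : (Fin d → ℝ) → ℝ) (S : Finset (Fin d)) (p a b : Fin d → ℝ) : ℝ :=
  ∑ T ∈ S.powerset, (-1 : ℝ) ^ T.card *
    f (fun i => if i ∈ S then (if i ∈ T then a i else b i) else p i)

/-- A grid (a partition generated by one-dimensional partitions of the sides) of the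
box `[lo, hi]` in the coordinates of `S`. -/
structure Grid (d : ℕ) (S : Finset (Fin d)) (lo hi : Fin d → ℝ) where
  m : Fin d → ℕ
  t : Fin d → ℕ → ℝ
  mono : ∀ i ∈ S, ∀ j k : ℕ, j ≤ k → k ≤ m i → t i j ≤ t i k
  first : ∀ i ∈ S, t i 0 = lo i
  last : ∀ i ∈ S, t i (m i) = hi i

/-- The sum, over all cells of a grid, of the absolute value of the quasi-volume of the cell. -/
def gridSum {d : ℕ} (f : (Fin d → ℝ) → ℝ) (S : Finset (Fin d)) (p lo hi : Fin d → ℝ)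
    (G : Grid d S lo hi) : ℝ :=
  ∑ k ∈ Fintype.piFinset (fun i => Finset.range (if i ∈ S then G.m i else 1)),
    |quasiVol f S p (fun i => G.t i (k i)) (fun i => G.t i (k i + 1))|

/-- The variation in the sense of Vitali of `f` on the face of the box `[lo, hi]` with active
coordinates `S`, the remaining coordinates being fixed according to the anchor `p`:
the supremum of `gridSum` over all grids. -/
def vitaliVar {d : ℕ} (f : (Fin d → ℝ) → ℝ) (S : Finset (Fin d)) (p lo hi : Fin d → ℝ) : ℝ :=
  sSup (Set.range (gridSum f S p lo hi))

/-- The Vitali variation on the face `(S, p)` of `[lo, hi]` is bounded (finite). -/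
def BddVitali {d : ℕ} (f : (Fin d → ℝ) → ℝ) (S : Finset (Fin d)) (p lo hi : Fin d → ℝ) : Prop :=
  BddAbove (Set.range (gridSum f S p lo hi))

/-- Hardy–Krause-type variation of `f` on the box `[lo, hi]` with anchor `p`: the sum, over all
nonempty sets `S` of coordinates, of the Vitali variation of the restriction of `f` to the face
of `[lo, hi]` whose coordinates outside `S` are fixed according to `p`. -/
def hkVarOn {d : ℕ} (f : (Fin d → ℝ) → ℝ) (p lo hi : Fin d → ℝ) : ℝ :=
  ∑ S ∈ (Finset.univ : Finset (Fin d)).powerset.erase ∅, vitaliVar f S p lo hi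

/-- All the Vitali variations occurring in `hkVarOn` are bounded. -/
def BddHKVarOn {d : ℕ} (f : (Fin d → ℝ) → ℝ) (p lo hi : Fin d → ℝ) : Prop :=
  ∀ S ∈ (Finset.univ : Finset (Fin d)).powerset.erase ∅, BddVitali f S p lo hi

/-- The Hardy–Krause variation of `f` on `[0,1]^d`, anchored at `1`. -/
def hkVar {d : ℕ} (f : (Fin d → ℝ) → ℝ) : ℝ := hkVarOn f 1 0 1

/-- `f` has bounded Hardy–Krause variation (anchored at `1`). -/
def BddHKVar {d : ℕ} (f : (Fin d → ℝ) → ℝ) : Prop := BddHKVarOn f 1 0 1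

/-- The Hardy–Krause variation of `f` on the box `[0, a]`, anchored at `0`. -/
def hkVar0On {d : ℕ} (f : (Fin d → ℝ) → ℝ) (a : Fin d → ℝ) : ℝ := hkVarOn f 0 0 a

/-- The Hardy–Krause variation of `f` on `[0,1]^d`, anchored at `0`. -/
def hkVar0 {d : ℕ} (f : (Fin d → ℝ) → ℝ) : ℝ := hkVarOn f 0 0 1

/-- `f` has bounded Hardy–Krause variation anchored at `0`. -/
def BddHKVar0 {d : ℕ} (f : (Fin d → ℝ) → ℝ) : Prop := BddHKVarOn f 0 0 1

/-- `f` is completely monotone: every quasi-volume of an axis-parallel box contained in a face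
of `[0,1]^d` (coordinates outside the active set `S` being fixed at `0` or `1`) is nonnegative. -/
def CompletelyMonotone {d : ℕ} (f : (Fin d → ℝ) → ℝ) : Prop :=
  ∀ S : Finset (Fin d), S.Nonempty → ∀ p : Fin d → ℝ, (∀ i ∉ S, p i = 0 ∨ p i = 1) →
    ∀ a b : Fin d → ℝ, a ∈ Set.Icc (0 : Fin d → ℝ) 1 → b ∈ Set.Icc (0 : Fin d → ℝ) 1 →
      a ≤ b → 0 ≤ quasiVol f S p a b

/-- `f` is coordinatewise right-continuous at every point of `[0,1]^d`. -/
def RightCts {d : ℕ} (f : (Fin d → ℝ) → ℝ) : Prop :=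
  ∀ x ∈ Set.Icc (0 : Fin d → ℝ) 1, ∀ i : Fin d,
    Filter.Tendsto (fun y : ℝ => f (Function.update x i y))
      (nhdsWithin (x i) (Set.Icc (x i) 1)) (nhds (f x))

/-- The star-discrepancy of the points `x 1, …, x N` with respect to the measure `μ`. -/
def starDisc {d : ℕ} (N : ℕ) (x : Fin N → Fin d → ℝ) (μ : Measure (Fin d → ℝ)) : ℝ :=
  ⨆ a : Set.Icc (0 : Fin d → ℝ) 1,
    |(∑ n : Fin N, Set.indicator (Set.Icc 0 (a : Fin d → ℝ)) (fun _ => (1 : ℝ)) (x n)) / N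
      - (μ (Set.Icc 0 (a : Fin d → ℝ))).toReal|

/-! ### Auxiliary lemmas -/

section Aux

variable {d : ℕ}

lemma quasiVol_congr (f : (Fin d → ℝ) → ℝ) (S : Finset (Fin d)) (p : Fin d → ℝ)
    {a a' b b' : Fin d → ℝ} (ha : ∀ i ∈ S, a i = a' i) (hb : ∀ i ∈ S, b i = b' i) :
    quasiVol f S p a b = quasiVol f S p a' b' := by
  unfold quasiVol
  refine Finset.sum_congr rfl fun T hT => ?_
  congr 2
  funext i
  by_cases hiS : i ∈ S
  · by_cases hiT : i ∈ T <;> simp [hiS, hiT, ha i hiS, hb i hiS]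
  · simp [hiS]

lemma quasiVol_empty (f : (Fin d → ℝ) → ℝ) (p a b : Fin d → ℝ) :
    quasiVol f ∅ p a b = f p := by
  simp [quasiVol]

lemma quasiVol_insert (f : (Fin d → ℝ) → ℝ) {S : Finset (Fin d)} {j : Fin d}
    (hj : j ∉ S) (p a b : Fin d → ℝ) :
    quasiVol f (insert j S) p a b
      = quasiVol f S (Function.update p j (b j)) a b
        - quasiVol f S (Function.update p j (a j)) a b := by
  unfold quasiVol
  rw [Finset.sum_powerset_insert hj]
  have h1 : ∀ T ∈ S.powerset,
      (-1 : ℝ) ^ T.card * f (fun i => if i ∈ insert j S then (if i ∈ T then a i else b i) else p i)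
      = (-1 : ℝ) ^ T.card *
        f (fun i => if i ∈ S then (if i ∈ T then a i else b i) else Function.update p j (b j) i) := by
    intro T hT
    rw [Finset.mem_powerset] at hT
    congr 2
    funext i
    by_cases hij : i = j
    · subst hij
      have hiT : i ∉ T := fun hh => hj (hT hh)
      simp [hj, hiT]
    · by_cases hiS : i ∈ S <;> simp [hiS, hij, Function.update_of_ne hij]
  have h2 : ∀ T ∈ S.powerset,
      (-1 : ℝ) ^ (insert j T).card *
        f (fun i => if i ∈ insert j S then (if i ∈ insert j T then a i else b i) else p i)
      = -((-1 : ℝ) ^ T.card *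
        f (fun i => if i ∈ S then (if i ∈ T then a i else b i) else Function.update p j (a j) i)) := by
    intro T hT
    rw [Finset.mem_powerset] at hT
    have hjT : j ∉ T := fun hh => hj (hT hh)
    rw [Finset.card_insert_of_notMem hjT, pow_succ]
    have harg : (fun i => if i ∈ insert j S then (if i ∈ insert j T then a i else b i) else p i)
        = (fun i => if i ∈ S then (if i ∈ T then a i else b i) else Function.update p j (a j) i) := by
      funext i
      by_cases hij : i = j
      · subst hij; simp [hj, hjT]
      · by_cases hiS : i ∈ S <;> simp [hiS, hij, hjT, Function.update_of_ne hij]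
    rw [harg]; ring
  rw [Finset.sum_congr rfl h1, Finset.sum_congr rfl h2, Finset.sum_neg_distrib]
  ring

/-- Splitting off one coordinate from a sum over `piFinset` of ranges. -/
lemma sum_piFinset_split (j : Fin d) (n : Fin d → ℕ) (F : (Fin d → ℕ) → ℝ) :
    ∑ k ∈ Fintype.piFinset (fun i => Finset.range (n i)), F k
      = ∑ r ∈ Finset.range (n j), ∑ k ∈ Fintype.piFinset
          (fun i => Finset.range (Function.update n j 1 i)), F (Function.update k j r) := by
  rw [← Finset.sum_product']
  refine Finset.sum_nbij' (fun k => (k j, Function.update k j 0))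
    (fun rk => Function.update rk.2 j rk.1) ?_ ?_ ?_ ?_ ?_
  · intro k hk
    rw [Fintype.mem_piFinset] at hk
    refine Finset.mem_product.2 ⟨by simpa using hk j, ?_⟩
    rw [Fintype.mem_piFinset]
    intro i
    by_cases hij : i = j
    · subst hij; simp
    · simp [Function.update_of_ne hij, hk i]
  · intro rk hrk
    rw [Finset.mem_product, Fintype.mem_piFinset] at hrk
    rw [Fintype.mem_piFinset]
    intro i
    by_cases hij : i = j
    · subst hij; simpa using hrk.1
    · have := hrk.2 i
      simpa [Function.update_of_ne hij] using this
  · intro k hk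
    show Function.update (Function.update k j 0) j (k j) = k
    rw [Function.update_idem, Function.update_eq_self]
  · intro rk hrk
    rw [Finset.mem_product, Fintype.mem_piFinset] at hrk
    have h2 : rk.2 j = 0 := by simpa [Nat.lt_one_iff] using hrk.2 j
    show (Function.update rk.2 j rk.1 j, Function.update (Function.update rk.2 j rk.1) j 0) = rk
    rw [Function.update_self, Function.update_idem]
    have : Function.update rk.2 j 0 = rk.2 := by
      rw [← h2, Function.update_eq_self]
    rw [this]
  · intro k hk
    show F k = F (Function.update (Function.update k j 0) j (k j))
    rw [Function.update_idem, Function.update_eq_self]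

/-- Telescoping of quasi-volumes over a grid. -/
lemma sum_quasiVol_grid (f : (Fin d → ℝ) → ℝ) (S : Finset (Fin d)) (p : Fin d → ℝ)
    (t : Fin d → ℕ → ℝ) (m : Fin d → ℕ) :
    ∑ k ∈ Fintype.piFinset (fun i => Finset.range (if i ∈ S then m i else 1)),
        quasiVol f S p (fun i => t i (k i)) (fun i => t i (k i + 1))
      = quasiVol f S p (fun i => t i 0) (fun i => t i (m i)) := by
  classical
  induction S using Finset.induction_on generalizing p with
  | empty =>
      have hset : Fintype.piFinset (fun i : Fin d => Finset.range (if i ∈ (∅ : Finset (Fin d)) then m i else 1))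
          = {fun _ => 0} := by
        ext k
        simp [Fintype.mem_piFinset, Nat.lt_one_iff, funext_iff]
      rw [hset, Finset.sum_singleton, quasiVol_empty, quasiVol_empty]
  | @insert j S₀ hj ih =>
      set n : Fin d → ℕ := fun i => if i ∈ insert j S₀ then m i else 1 with hn
      have hnj : n j = m j := by simp [hn]
      have hupd : Function.update n j 1 = fun i => if i ∈ S₀ then m i else 1 := by
        funext i
        by_cases hij : i = j
        · subst hij; simp [Function.update_self, hj]
        · simp [Function.update_of_ne hij, hn, Finset.mem_insert, hij]
      rw [sum_piFinset_split j n, hnj, hupd]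
      have hstep : ∀ r ∈ Finset.range (m j),
          ∑ k ∈ Fintype.piFinset (fun i => Finset.range (if i ∈ S₀ then m i else 1)),
            quasiVol f (insert j S₀) p
              (fun i => t i (Function.update k j r i))
              (fun i => t i (Function.update k j r i + 1))
          = quasiVol f S₀ (Function.update p j (t j (r+1))) (fun i => t i 0) (fun i => t i (m i))
            - quasiVol f S₀ (Function.update p j (t j r)) (fun i => t i 0) (fun i => t i (m i)) := by
        intro r _
        have hterm : ∀ k ∈ Fintype.piFinset (fun i => Finset.range (if i ∈ S₀ then m i else 1)),
            quasiVol f (insert j S₀) p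
              (fun i => t i (Function.update k j r i))
              (fun i => t i (Function.update k j r i + 1))
            = quasiVol f S₀ (Function.update p j (t j (r+1)))
                (fun i => t i (k i)) (fun i => t i (k i + 1))
              - quasiVol f S₀ (Function.update p j (t j r))
                (fun i => t i (k i)) (fun i => t i (k i + 1)) := by
          intro k hk
          rw [quasiVol_insert f hj]
          simp only [Function.update_self]
          congr 1
          · exact quasiVol_congr f S₀ _
              (fun i hi => by
                have hij : i ≠ j := fun hh => hj (hh ▸ hi)
                simp [Function.update_of_ne hij])
              (fun i hi => by
                have hij : i ≠ j := fun hh => hj (hh ▸ hi)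
                simp [Function.update_of_ne hij])
          · exact quasiVol_congr f S₀ _
              (fun i hi => by
                have hij : i ≠ j := fun hh => hj (hh ▸ hi)
                simp [Function.update_of_ne hij])
              (fun i hi => by
                have hij : i ≠ j := fun hh => hj (hh ▸ hi)
                simp [Function.update_of_ne hij])
        rw [Finset.sum_congr rfl hterm, Finset.sum_sub_distrib, ih, ih]
      rw [Finset.sum_congr rfl hstep, Finset.sum_range_sub
        (fun r => quasiVol f S₀ (Function.update p j (t j r)) (fun i => t i 0) (fun i => t i (m i)))]
      rw [quasiVol_insert f hj]

lemma grid_t_mem {S : Finset (Fin d)} {x : Fin d → ℝ} (hx : x ∈ Set.Icc (0 : Fin d → ℝ) 1)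
    (G : Grid d S 0 x) {i : Fin d} (hi : i ∈ S) {j : ℕ} (hj : j ≤ G.m i) :
    0 ≤ G.t i j ∧ G.t i j ≤ 1 := by
  constructor
  · have := G.mono i hi 0 j (Nat.zero_le _) hj
    rw [G.first i hi] at this
    simpa using this
  · have := G.mono i hi j (G.m i) hj le_rfl
    rw [G.last i hi] at this
    exact this.trans (hx.2 i)

/-- Each cell quasi-volume of a grid of `[0,x]` is nonnegative for a completely
monotone function. -/
lemma cell_nonneg {h : (Fin d → ℝ) → ℝ} (hcm : CompletelyMonotone h)
    {x : Fin d → ℝ} (hx : x ∈ Set.Icc (0 : Fin d → ℝ) 1)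
    {S : Finset (Fin d)} (hS : S.Nonempty) (G : Grid d S 0 x)
    {k : Fin d → ℕ} (hk : ∀ i ∈ S, k i < G.m i) :
    0 ≤ quasiVol h S 0 (fun i => G.t i (k i)) (fun i => G.t i (k i + 1)) := by
  set a' : Fin d → ℝ := fun i => if i ∈ S then G.t i (k i) else 0 with ha'
  set b' : Fin d → ℝ := fun i => if i ∈ S then G.t i (k i + 1) else 0 with hb'
  have heq : quasiVol h S 0 (fun i => G.t i (k i)) (fun i => G.t i (k i + 1))
      = quasiVol h S 0 a' b' :=
    quasiVol_congr h S 0 (fun i hi => by simp [ha', hi]) (fun i hi => by simp [hb', hi])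
  rw [heq]
  refine hcm S hS 0 (fun i _ => Or.inl rfl) a' b' ?_ ?_ ?_
  · constructor <;> intro i
    · by_cases hi : i ∈ S
      · simp only [ha', hi, if_pos, Pi.zero_apply]
        exact (grid_t_mem hx G hi (le_of_lt (hk i hi))).1
      · simp [ha', hi]
    · by_cases hi : i ∈ S
      · simp only [ha', hi, if_pos, Pi.one_apply]
        exact (grid_t_mem hx G hi (le_of_lt (hk i hi))).2
      · simp [ha', hi]
  · constructor <;> intro i
    · by_cases hi : i ∈ S
      · simp only [hb', hi, if_pos, Pi.zero_apply]
        exact (grid_t_mem hx G hi (hk i hi)).1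
      · simp [hb', hi]
    · by_cases hi : i ∈ S
      · simp only [hb', hi, if_pos, Pi.one_apply]
        exact (grid_t_mem hx G hi (hk i hi)).2
      · simp [hb', hi]
  · intro i
    by_cases hi : i ∈ S
    · simp only [ha', hb', hi, if_pos]
      exact G.mono i hi (k i) (k i + 1) (Nat.le_succ _) (hk i hi)
    · simp [ha', hb', hi]

lemma gridSum_eq {h : (Fin d → ℝ) → ℝ} (hcm : CompletelyMonotone h)
    {x : Fin d → ℝ} (hx : x ∈ Set.Icc (0 : Fin d → ℝ) 1)
    {S : Finset (Fin d)} (hS : S.Nonempty) (G : Grid d S 0 x) :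
    gridSum h S 0 0 x G = quasiVol h S 0 0 x := by
  unfold gridSum
  have habs : ∀ k ∈ Fintype.piFinset (fun i => Finset.range (if i ∈ S then G.m i else 1)),
      |quasiVol h S 0 (fun i => G.t i (k i)) (fun i => G.t i (k i + 1))|
      = quasiVol h S 0 (fun i => G.t i (k i)) (fun i => G.t i (k i + 1)) := by
    intro k hk
    rw [Fintype.mem_piFinset] at hk
    refine abs_of_nonneg (cell_nonneg hcm hx hS G ?_)
    intro i hi
    have := hk i
    simpa [hi] using this
  rw [Finset.sum_congr rfl habs, sum_quasiVol_grid]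
  exact quasiVol_congr h S 0 (fun i hi => by simp [G.first i hi]) (fun i hi => G.last i hi)

/-- The trivial one-cell grid. -/
def trivGrid (S : Finset (Fin d)) {x : Fin d → ℝ} (hx : x ∈ Set.Icc (0 : Fin d → ℝ) 1) :
    Grid d S 0 x where
  m := fun _ => 1
  t := fun i j => if j = 0 then 0 else x i
  mono := by
    intro i hi j k hjk hk
    have h0 : (0 : ℝ) ≤ x i := hx.1 i
    interval_cases k
    · interval_cases j <;> simp
    · interval_cases j <;> simp [h0]
  first := fun i _ => by simp
  last := fun i _ => by simp

lemma vitaliVar_eq {h : (Fin d → ℝ) → ℝ} (hcm : CompletelyMonotone h)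
    {x : Fin d → ℝ} (hx : x ∈ Set.Icc (0 : Fin d → ℝ) 1)
    {S : Finset (Fin d)} (hS : S.Nonempty) :
    vitaliVar h S 0 0 x = quasiVol h S 0 0 x := by
  unfold vitaliVar
  have : gridSum h S 0 0 x = fun _ => quasiVol h S 0 0 x :=
    funext fun G => gridSum_eq hcm hx hS G
  rw [this]
  have hne : Nonempty (Grid d S 0 x) := ⟨trivGrid S hx⟩
  rw [Set.range_const, csSup_singleton]

/-- Sum of signs over a powerset, in `ℝ`. -/
lemma sum_pow_neg_one (W : Finset (Fin d)) :
    ∑ T ∈ W.powerset, (-1 : ℝ) ^ T.card = if W = ∅ then 1 else 0 := by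
  have := Finset.sum_powerset_neg_one_pow_card (x := W)
  have hcast : ∑ T ∈ W.powerset, (-1 : ℝ) ^ T.card
      = ((∑ T ∈ W.powerset, (-1 : ℤ) ^ T.card : ℤ) : ℝ) := by push_cast; rfl
  rw [hcast, this]
  split <;> simp

/-- The inclusion–exclusion/Möbius identity. -/
lemma moebius_sum (g : Finset (Fin d) → ℝ) :
    ∑ S ∈ (Finset.univ : Finset (Fin d)).powerset,
      ∑ T ∈ S.powerset, (-1 : ℝ) ^ T.card * g (S \ T) = g Finset.univ := by
  classical
  have hinner : ∀ S ∈ (Finset.univ : Finset (Fin d)).powerset,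
      ∑ T ∈ S.powerset, (-1 : ℝ) ^ T.card * g (S \ T)
      = ∑ U ∈ S.powerset, (-1 : ℝ) ^ (S \ U).card * g U := by
    intro S _
    refine Finset.sum_nbij' (fun T => S \ T) (fun U => S \ U) ?_ ?_ ?_ ?_ ?_
    · intro T hT; exact Finset.mem_powerset.2 Finset.sdiff_subset
    · intro U hU; exact Finset.mem_powerset.2 Finset.sdiff_subset
    · intro T hT; exact Finset.sdiff_sdiff_eq_self (Finset.mem_powerset.1 hT)
    · intro U hU; exact Finset.sdiff_sdiff_eq_self (Finset.mem_powerset.1 hU)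
    · intro T hT
      rw [Finset.sdiff_sdiff_eq_self (Finset.mem_powerset.1 hT)]
  rw [Finset.sum_congr rfl hinner]
  have hfilter : ∀ S : Finset (Fin d),
      S.powerset = (Finset.univ : Finset (Fin d)).powerset.filter (· ⊆ S) := by
    intro S
    ext U
    simp [Finset.mem_powerset, Finset.subset_univ]
  have hext : ∀ S ∈ (Finset.univ : Finset (Fin d)).powerset,
      ∑ U ∈ S.powerset, (-1 : ℝ) ^ (S \ U).card * g U
      = ∑ U ∈ (Finset.univ : Finset (Fin d)).powerset,
          if U ⊆ S then (-1 : ℝ) ^ (S \ U).card * g U else 0 := by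
    intro S _
    rw [hfilter S, Finset.sum_filter]
  rw [Finset.sum_congr rfl hext, Finset.sum_comm]
  have hU : ∀ U ∈ (Finset.univ : Finset (Fin d)).powerset,
      ∑ S ∈ (Finset.univ : Finset (Fin d)).powerset,
          (if U ⊆ S then (-1 : ℝ) ^ (S \ U).card * g U else 0)
      = (if U = Finset.univ then 1 else 0) * g U := by
    intro U _
    rw [← Finset.sum_filter]
    have hbij : ∑ S ∈ (Finset.univ : Finset (Fin d)).powerset.filter (U ⊆ ·),
        (-1 : ℝ) ^ (S \ U).card * g U
        = ∑ W ∈ (Finset.univ \ U).powerset, (-1 : ℝ) ^ W.card * g U := by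
      refine Finset.sum_nbij' (fun S => S \ U) (fun W => U ∪ W) ?_ ?_ ?_ ?_ ?_
      · intro S hS
        exact Finset.mem_powerset.2 (Finset.sdiff_subset_sdiff (Finset.subset_univ S) le_rfl)
      · intro W hW
        refine Finset.mem_filter.2 ⟨Finset.mem_powerset.2 (Finset.subset_univ _),
          Finset.subset_union_left⟩
      · intro S hS
        have hUS : U ⊆ S := (Finset.mem_filter.1 hS).2
        exact Finset.union_sdiff_of_subset hUS
      · intro W hW
        have hdisj : Disjoint U W := by
          have := Finset.mem_powerset.1 hW
          exact Finset.disjoint_left.2 fun a haU haW => (Finset.mem_sdiff.1 (this haW)).2 haU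
        show (U ∪ W) \ U = W
        rw [Finset.union_sdiff_cancel_left hdisj]
      · intro S hS; rfl
    rw [hbij, ← Finset.sum_mul, sum_pow_neg_one]
    congr 1
    by_cases hU : U = Finset.univ
    · subst hU; simp
    · rw [if_neg hU, if_neg]
      intro hh
      exact hU (Finset.univ_subset_iff.1 (Finset.sdiff_eq_empty_iff_subset.1 hh))
  rw [Finset.sum_congr rfl hU]
  rw [Finset.sum_eq_single Finset.univ
    (fun U _ hne => by simp [hne])
    (fun habs => absurd (Finset.mem_powerset.2 (Finset.subset_univ _)) habs)]
  simp

end Aux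

/-- For a completely monotone function `h`, `V_HK0(h;[0,x]) = h x - h 0`. -/
theorem stmt14 {d : ℕ} (h : (Fin d → ℝ) → ℝ) (hcm : CompletelyMonotone h) :
    ∀ x ∈ Set.Icc (0 : Fin d → ℝ) 1, hkVar0On h x = h x - h 0 := by
  intro x hx
  classical
  have hvit : ∀ S ∈ ((Finset.univ : Finset (Fin d)).powerset.erase ∅),
      vitaliVar h S 0 0 x = quasiVol h S 0 0 x := by
    intro S hS
    have hSne : S.Nonempty :=
      Finset.nonempty_iff_ne_empty.2 (Finset.ne_of_mem_erase hS)
    exact vitaliVar_eq hcm hx hSne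
  have hsum : hkVar0On h x
      = ∑ S ∈ ((Finset.univ : Finset (Fin d)).powerset.erase ∅), quasiVol h S 0 0 x := by
    unfold hkVar0On hkVarOn
    exact Finset.sum_congr rfl hvit
  have hmem : (∅ : Finset (Fin d)) ∈ (Finset.univ : Finset (Fin d)).powerset :=
    Finset.mem_powerset.2 (Finset.empty_subset _)
  have htotal : quasiVol h ∅ 0 0 x
      + ∑ S ∈ ((Finset.univ : Finset (Fin d)).powerset.erase ∅), quasiVol h S 0 0 x
      = ∑ S ∈ (Finset.univ : Finset (Fin d)).powerset, quasiVol h S 0 0 x :=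
    Finset.add_sum_erase _ (fun S => quasiVol h S 0 0 x) hmem
  set g : Finset (Fin d) → ℝ := fun U => h (fun i => if i ∈ U then x i else 0) with hg
  have hq : ∀ S ∈ (Finset.univ : Finset (Fin d)).powerset,
      quasiVol h S 0 0 x = ∑ T ∈ S.powerset, (-1 : ℝ) ^ T.card * g (S \ T) := by
    intro S _
    unfold quasiVol
    refine Finset.sum_congr rfl fun T hT => ?_
    rw [Finset.mem_powerset] at hT
    congr 2
    funext i
    by_cases hiS : i ∈ S
    · by_cases hiT : i ∈ T
      · simp [hg, hiS, hiT]
      · simp [hg, hiS, hiT]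
    · have hiT : i ∉ T := fun hh => hiS (hT hh)
      simp [hg, hiS, hiT]
  have hmoeb : ∑ S ∈ (Finset.univ : Finset (Fin d)).powerset, quasiVol h S 0 0 x = h x := by
    rw [Finset.sum_congr rfl hq, moebius_sum]
    simp [hg]
  have hempty : quasiVol h ∅ 0 0 x = h 0 := by
    rw [quasiVol_empty]
  rw [hsum]
  have := htotal
  rw [hmoeb, hempty] at this
  linarith
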